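/- arXiv:1703.08606 — 3 statements merged into one kernel-verified Lean document; each statement's English description precedes it below -/
import Mathlib

section
/- Let G be a group and suppose the collection of non-generic subsets of G is an ideal (closed under subsets and finite unions), where a subset is generic if finitely many right translates of it cover G. If X and Y are generic subsets of G, then there exist a generic subset A′ ⊆ X and an element g ∈ G such that A′⁻¹·g ⊆ Y. -/
/-!
Cover `G` by right translates `Y·cᵢ`. Every `a ∈ X` has `a⁻¹ ∈ Y·cᵢ` for some `i`, so `X` is the
finite union of the pieces `{a ∈ X | a⁻¹·cᵢ⁻¹ ∈ Y}`; since `X` is generic, one piece is generic,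
and `g = cᵢ⁻¹` works for it.
-/

/-- right translate S·g -/
def rT {G : Type*} [Group G] (S : Set G) (g : G) : Set G := (· * g) '' S

/-- S is generic: finitely many right translates of S cover G. -/
def IsGeneric {G : Type*} [Group G] (S : Set G) : Prop :=
  ∃ (n : ℕ) (c : Fin n → G), ∀ x : G, ∃ i, x ∈ rT S (c i)

section Generic

variable {G : Type*} [Group G]

theorem mem_rT {S : Set G} {g x : G} : x ∈ rT S g ↔ x * g⁻¹ ∈ S := by
  constructor
  · rintro ⟨s, hs, rfl⟩
    simpa using hs
  · intro hx
    exact ⟨x * g⁻¹, hx, inv_mul_cancel_right x g⟩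

theorem IsGeneric.iUnion_inv_mul_mem_eq {Y : Set G} (hY : IsGeneric Y) (X : Set G) :
    ∃ (n : ℕ) (g : Fin n → G), ⋃ i, {a ∈ X | a⁻¹ * g i ∈ Y} = X := by
  obtain ⟨n, c, hc⟩ := hY
  refine ⟨n, fun i => (c i)⁻¹, Set.Subset.antisymm (Set.iUnion_subset fun _ _ ha => ha.1) ?_⟩
  intro a ha
  obtain ⟨i, hi⟩ := hc a⁻¹
  exact Set.mem_iUnion.2 ⟨i, ha, mem_rT.1 hi⟩

end Generic

theorem stmt4_general {G : Type*} [Group G] (X Y : Set G)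
    (hX : IsGeneric X) (hY : IsGeneric Y)
    (hIdeal : ∀ (n : ℕ) (F : Fin n → Set G), IsGeneric (⋃ i, F i) → ∃ i, IsGeneric (F i)) :
    ∃ (A' : Set G) (g : G), A' ⊆ X ∧ IsGeneric A' ∧ (∀ a ∈ A', a⁻¹ * g ∈ Y) := by
  obtain ⟨n, g, hcover⟩ := hY.iUnion_inv_mul_mem_eq X
  obtain ⟨i, hi⟩ := hIdeal n _ (hcover ▸ hX)
  exact ⟨_, g i, fun a ha => ha.1, hi, fun a ha => ha.2⟩

/-- If non-generic sets form an ideal (of a generic finite union,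
some piece is generic; subsets of non-generics are non-generic), and X, Y are
generic, then there is a generic A′ ⊆ X and g ∈ G with A′⁻¹·g ⊆ Y. -/
theorem stmt4 {G : Type*} [Group G] (X Y : Set G)
    (hX : IsGeneric X) (hY : IsGeneric Y)
    (hIdeal : ∀ (n : ℕ) (F : Fin n → Set G), IsGeneric (⋃ i, F i) → ∃ i, IsGeneric (F i))
    (hMono : ∀ S T : Set G, S ⊆ T → IsGeneric S → IsGeneric T) :
    ∃ (A' : Set G) (g : G), A' ⊆ X ∧ IsGeneric A' ∧ (∀ a ∈ A', a⁻¹ * g ∈ Y) :=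
  stmt4_general X Y hX hY hIdeal
end

section
/- Let G be a group, H a group, and suppose given: sets A′, B ⊆ G, elements s ∈ A′, t ∈ B with A′⁻¹·(s·t) ⊆ B, injective maps f on a set U ⊇ A′, g on V ⊇ B ∪ A′⁻¹·s·t, h on W ⊇ A′·B into H, such that f(x)·g(y) = h(x·y) for all (x,y) ∈ A′ × B. Then the map φ : A′⁻¹·s → H defined by φ(x⁻¹·s) = f(x)⁻¹·f(s) for x ∈ A′ is a local homomorphism: whenever x₁, x₂, z ∈ A′ satisfy z⁻¹ = x₁⁻¹·s·x₂⁻¹, one has f(x₁)·f(z)⁻¹·f(x₂) = f(s), hence φ((x₁⁻¹·s)·(x₂⁻¹·s)) = φ(x₁⁻¹·s)·φ(x₂⁻¹·s). -/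
/-!
For `a ∈ A'` the cocycle identity at the two factorisations `s * t = a * (a⁻¹ * (s * t))`
determines `g (a⁻¹ * (s * t)) = (f a)⁻¹ * (f s * g t)`. Evaluating the identity at
`x₁ * (z⁻¹ * (s * t)) = s * (x₂⁻¹ * (s * t))` and cancelling `f s * g t` gives the claim.
-/

open scoped Pointwise

section Cocycle

variable {G H : Type*} [Group G] [Group H] {A B : Set G} {f g h : G → H}

theorem cocycle_congr (hcoc : ∀ x ∈ A, ∀ y ∈ B, f x * g y = h (x * y))
    {x x' y y' : G} (hx : x ∈ A) (hx' : x' ∈ A) (hy : y ∈ B) (hy' : y' ∈ B)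
    (hxy : x * y = x' * y') : f x * g y = f x' * g y' := by
  rw [hcoc x hx y hy, hcoc x' hx' y' hy', hxy]

theorem cocycle_right_eq (hcoc : ∀ x ∈ A, ∀ y ∈ B, f x * g y = h (x * y))
    {x x' y y' : G} (hx : x ∈ A) (hx' : x' ∈ A) (hy : y ∈ B) (hy' : y' ∈ B)
    (hxy : x * y = x' * y') : g y = (f x)⁻¹ * (f x' * g y') :=
  eq_inv_mul_of_mul_eq (cocycle_congr hcoc hx hx' hy hy' hxy)

end Cocycle

theorem stmt11_general {G H : Type*} [Group G] [Group H] (A' B : Set G) (s t : G)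
    (hs : s ∈ A') (ht : t ∈ B)
    (hAB : ∀ a ∈ A', a⁻¹ * (s * t) ∈ B)
    (f g h : G → H)
    (hcoc : ∀ x ∈ A', ∀ y ∈ B, f x * g y = h (x * y)) :
    ∀ x₁ ∈ A', ∀ x₂ ∈ A', ∀ z ∈ A', z⁻¹ = x₁⁻¹ * s * x₂⁻¹ →
      f x₁ * (f z)⁻¹ * f x₂ = f s := by
  intro x₁ hx₁ x₂ hx₂ z hz hzeq
  have hgz : g (z⁻¹ * (s * t)) = (f z)⁻¹ * (f s * g t) :=
    cocycle_right_eq hcoc hz hs (hAB z hz) ht (by group)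
  have hgx₂ : g (x₂⁻¹ * (s * t)) = (f x₂)⁻¹ * (f s * g t) :=
    cocycle_right_eq hcoc hx₂ hs (hAB x₂ hx₂) ht (by group)
  have key : f x₁ * g (z⁻¹ * (s * t)) = f s * g (x₂⁻¹ * (s * t)) :=
    cocycle_congr hcoc hx₁ hs (hAB z hz) (hAB x₂ hx₂) (by rw [hzeq]; group)
  rw [hgz, hgx₂, ← mul_assoc (f x₁), ← mul_assoc (f s)] at key
  rw [mul_right_cancel key, inv_mul_cancel_right]

/-- cocycle setup: f(x)·g(y) = h(x·y) on A′ × B, s ∈ A′, t ∈ B,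
A′⁻¹·(s·t) ⊆ B. Then φ(x⁻¹·s) = f(x)⁻¹·f(s) is a local homomorphism: if
x₁, x₂, z ∈ A′ with z⁻¹ = x₁⁻¹·s·x₂⁻¹ then f(x₁)·f(z)⁻¹·f(x₂) = f(s). -/
theorem stmt11 {G H : Type*} [Group G] [Group H] (A' B : Set G) (s t : G)
    (hs : s ∈ A') (ht : t ∈ B)
    (hAB : ∀ a ∈ A', a⁻¹ * (s * t) ∈ B)
    (f g h : G → H)
    (hf : Set.InjOn f A') (hg : Set.InjOn g B) (hh : Set.InjOn h (A' * B))
    (hcoc : ∀ x ∈ A', ∀ y ∈ B, f x * g y = h (x * y)) :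
    ∀ x₁ ∈ A', ∀ x₂ ∈ A', ∀ z ∈ A', z⁻¹ = x₁⁻¹ * s * x₂⁻¹ →
      f x₁ * (f z)⁻¹ * f x₂ = f s :=
  stmt11_general A' B s t hs ht hAB f g h hcoc
end

section
/- Under the cocycle hypotheses (G, H groups; A′, B ⊆ G with s ∈ A′, t ∈ B, A′⁻¹·(s·t) ⊆ B; injective f, g, h with f(x)·g(y) = h(x·y) on A′ × B), the inverse map φ⁻¹ : f(A′)⁻¹·f(s) → A′⁻¹·s given by φ⁻¹(y⁻¹·f(s)) = f⁻¹(y)⁻¹·s for y ∈ f(A′) is a local homomorphism: if x₁, x₂ ∈ A′ and w ∈ f(A′) satisfy w⁻¹ = f(x₁)⁻¹·f(s)·f(x₂)⁻¹, then x₁·f⁻¹(w)⁻¹·x₂ = s. -/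
open scoped Pointwise

/-! Fix `c = s·t`, so that every `a ∈ A′` splits `c` as `a · (a⁻¹·c)` with `a⁻¹·c ∈ B`, and the
cocycle identity gives `f a · g(a⁻¹·c) = h c` independently of `a`. Multiplying the hypothesis
`f x₁ · (f w)⁻¹ · f x₂ = f s` on the right by `g(x₂⁻¹·c)` and using this twice turns it into
`h(x₁·w⁻¹·c) = h(s·x₂⁻¹·c)`; injectivity of `h` on `A′·B` then gives `x₁·w⁻¹ = s·x₂⁻¹`. -/

section Cocycle

variable {G H : Type*} [Group G] [Group H] {A B : Set G} {f g h : G → H}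

theorem cocycle_mul_inv_mul_eq (hcoc : ∀ x ∈ A, ∀ y ∈ B, f x * g y = h (x * y))
    {a c : G} (ha : a ∈ A) (hac : a⁻¹ * c ∈ B) : f a * g (a⁻¹ * c) = h c := by
  rw [hcoc a ha _ hac, mul_inv_cancel_left]

theorem cocycle_inv_mul_mul_eq (hcoc : ∀ x ∈ A, ∀ y ∈ B, f x * g y = h (x * y))
    {a b c : G} (ha : a ∈ A) (hb : b ∈ A) (hac : a⁻¹ * c ∈ B) (hbc : b⁻¹ * c ∈ B) :
    (f a)⁻¹ * f b * g (b⁻¹ * c) = g (a⁻¹ * c) := by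
  rw [mul_assoc, cocycle_mul_inv_mul_eq hcoc hb hbc, ← cocycle_mul_inv_mul_eq hcoc ha hac,
    inv_mul_cancel_left]

theorem mul_inv_eq_of_cocycle (hcoc : ∀ x ∈ A, ∀ y ∈ B, f x * g y = h (x * y))
    (hh : Set.InjOn h (A * B)) {x₁ x₂ w s c : G} (hx₁ : x₁ ∈ A) (hx₂ : x₂ ∈ A) (hw : w ∈ A)
    (hs : s ∈ A) (hwc : w⁻¹ * c ∈ B) (hx₂c : x₂⁻¹ * c ∈ B)
    (heq : f x₁ * (f w)⁻¹ * f x₂ = f s) : x₁ * w⁻¹ = s * x₂⁻¹ := by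
  have hcomp : h (x₁ * (w⁻¹ * c)) = h (s * (x₂⁻¹ * c)) :=
    calc h (x₁ * (w⁻¹ * c))
        = f x₁ * g (w⁻¹ * c) := (hcoc x₁ hx₁ _ hwc).symm
      _ = f x₁ * ((f w)⁻¹ * f x₂ * g (x₂⁻¹ * c)) := by
          rw [cocycle_inv_mul_mul_eq hcoc hw hx₂ hwc hx₂c]
      _ = f s * g (x₂⁻¹ * c) := by rw [← heq]; group
      _ = h (s * (x₂⁻¹ * c)) := hcoc s hs _ hx₂c
  have hsplit := hh (Set.mul_mem_mul hx₁ hwc) (Set.mul_mem_mul hs hx₂c) hcomp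
  simpa only [← mul_assoc, mul_left_inj] using hsplit

end Cocycle

theorem stmt13_general {G H : Type*} [Group G] [Group H] (A' B : Set G) (s t : G)
    (hs : s ∈ A')
    (hAB : ∀ a ∈ A', a⁻¹ * (s * t) ∈ B)
    (f g h : G → H)
    (hh : Set.InjOn h (A' * B))
    (hcoc : ∀ x ∈ A', ∀ y ∈ B, f x * g y = h (x * y)) :
    ∀ x₁ ∈ A', ∀ x₂ ∈ A', ∀ w ∈ A',
      (f w)⁻¹ = (f x₁)⁻¹ * f s * (f x₂)⁻¹ → x₁ * w⁻¹ * x₂ = s := by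
  intro x₁ hx₁ x₂ hx₂ w hw heq
  have hfs : f x₁ * (f w)⁻¹ * f x₂ = f s := by rw [heq]; group
  rw [mul_inv_eq_of_cocycle hcoc hh hx₁ hx₂ hw hs (hAB w hw) (hAB x₂ hx₂) hfs, inv_mul_cancel_right]

/-- under the cocycle hypotheses, the inverse map
φ⁻¹(y⁻¹·f(s)) = f⁻¹(y)⁻¹·s is a local homomorphism: if x₁, x₂, w ∈ A′ with
(f w)⁻¹ = f(x₁)⁻¹·f(s)·f(x₂)⁻¹ then x₁·w⁻¹·x₂ = s. -/
theorem stmt13 {G H : Type*} [Group G] [Group H] (A' B : Set G) (s t : G)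
    (hs : s ∈ A') (ht : t ∈ B)
    (hAB : ∀ a ∈ A', a⁻¹ * (s * t) ∈ B)
    (f g h : G → H)
    (hf : Set.InjOn f A') (hg : Set.InjOn g B) (hh : Set.InjOn h (A' * B))
    (hcoc : ∀ x ∈ A', ∀ y ∈ B, f x * g y = h (x * y)) :
    ∀ x₁ ∈ A', ∀ x₂ ∈ A', ∀ w ∈ A',
      (f w)⁻¹ = (f x₁)⁻¹ * f s * (f x₂)⁻¹ → x₁ * w⁻¹ * x₂ = s :=
  stmt13_general A' B s t hs hAB f g h hh hcoc
end
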